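/- arXiv:2004.00112 — 4 statements merged into one kernel-verified Lean document; each statement's English description precedes it below -/
import Mathlib

section
/- Let (M₁, M₂) be a matroid quotient on ground set [n], and let i ∈ [n] be an element that is neither a loop nor a coloop of M₂ nor of M₁. Then the Las Vergnas Tutte polynomial satisfies the deletion-contraction relation LV𝒯_{(M₁,M₂)}(x,y,z) = LV𝒯_{(M₁\i, M₂\i)}(x,y,z) + LV𝒯_{(M₁/i, M₂/i)}(x,y,z). -/
/-- Deletion-contraction for the Las Vergnas Tutte polynomial: if (M₁,M₂) is a matroid
quotient on [n] (here ground set `α`) and e is neither a loop nor a coloop of M₁ nor of M₂,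
then LV𝒯_{(M₁,M₂)}(x,y,z) = LV𝒯_{(M₁\e, M₂\e)}(x,y,z) + LV𝒯_{(M₁/e, M₂/e)}(x,y,z). -/
theorem stmt_8 {α : Type*} [Fintype α] [DecidableEq α]
    (rk1 rk2 : Finset α → ℕ)
    (h1le : ∀ S : Finset α, rk1 S ≤ S.card)
    (h1mono : ∀ ⦃A B : Finset α⦄, A ⊆ B → rk1 A ≤ rk1 B)
    (h1submod : ∀ A B : Finset α, rk1 (A ∪ B) + rk1 (A ∩ B) ≤ rk1 A + rk1 B)
    (h2le : ∀ S : Finset α, rk2 S ≤ S.card)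
    (h2mono : ∀ ⦃A B : Finset α⦄, A ⊆ B → rk2 A ≤ rk2 B)
    (h2submod : ∀ A B : Finset α, rk2 (A ∪ B) + rk2 (A ∩ B) ≤ rk2 A + rk2 B)
    (hquot : ∀ ⦃A B : Finset α⦄, A ⊆ B → rk1 B - rk1 A ≤ rk2 B - rk2 A)
    (e : α)
    (h1loop : rk1 {e} = 1) (h2loop : rk2 {e} = 1)
    (h1coloop : rk1 (Finset.univ.erase e) = rk1 Finset.univ)
    (h2coloop : rk2 (Finset.univ.erase e) = rk2 Finset.univ)
    (x y z : ℝ) :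
    -- contraction rank functions: rk_{Mᵢ/e}(S) = rkᵢ(S ∪ {e}) - rkᵢ({e})
    let rk1c : Finset α → ℕ := fun S => rk1 (insert e S) - rk1 {e}
    let rk2c : Finset α → ℕ := fun S => rk2 (insert e S) - rk2 {e}
    -- ground set of the deletion/contraction
    let E' : Finset α := Finset.univ.erase e
    (∑ S : Finset α,
      (x - 1) ^ (rk1 Finset.univ - rk1 S) * (y - 1) ^ (S.card - rk2 S) *
        z ^ ((rk2 Finset.univ - rk2 S) - (rk1 Finset.univ - rk1 S)))
    = (∑ S ∈ E'.powerset,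
        (x - 1) ^ (rk1 E' - rk1 S) * (y - 1) ^ (S.card - rk2 S) *
          z ^ ((rk2 E' - rk2 S) - (rk1 E' - rk1 S)))
      + (∑ S ∈ E'.powerset,
          (x - 1) ^ (rk1c E' - rk1c S) * (y - 1) ^ (S.card - rk2c S) *
            z ^ ((rk2c E' - rk2c S) - (rk1c E' - rk1c S))) := by
  intro rk1c rk2c E'
  have heE : e ∉ E' := Finset.notMem_erase e _
  have hE : insert e E' = Finset.univ := Finset.insert_erase (Finset.mem_univ e)
  have hpow : (Finset.univ : Finset (Finset α)) = (insert e E').powerset := by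
    rw [hE, Finset.powerset_univ]
  rw [hpow, Finset.sum_powerset_insert heE]
  congr 1
  · refine Finset.sum_congr rfl fun T hT => ?_
    rw [h1coloop, h2coloop]
  · refine Finset.sum_congr rfl fun T hT => ?_
    rw [Finset.mem_powerset] at hT
    have heT : e ∉ T := fun h => heE (hT h)
    have h1 : 1 ≤ rk1 (insert e T) := by
      rw [← h1loop]; exact h1mono (Finset.singleton_subset_iff.2 (Finset.mem_insert_self e T))
    have h2 : 1 ≤ rk2 (insert e T) := by
      rw [← h2loop]; exact h2mono (Finset.singleton_subset_iff.2 (Finset.mem_insert_self e T))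
    have hc1 : rk1c E' = rk1 Finset.univ - 1 := by
      simp only [rk1c, hE, h1loop]
    have hc2 : rk2c E' = rk2 Finset.univ - 1 := by
      simp only [rk2c, hE, h2loop]
    have hc1T : rk1c T = rk1 (insert e T) - 1 := by simp only [rk1c, h1loop]
    have hc2T : rk2c T = rk2 (insert e T) - 1 := by simp only [rk2c, h2loop]
    have h1u : rk1 (insert e T) ≤ rk1 Finset.univ := h1mono (Finset.subset_univ _)
    have h2u : rk2 (insert e T) ≤ rk2 Finset.univ := h2mono (Finset.subset_univ _)
    have hcard : (insert e T).card = T.card + 1 := Finset.card_insert_of_notMem heT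
    rw [hc1, hc2, hc1T, hc2T, hcard]
    congr 1
    · congr 1
      · congr 1
        omega
      · congr 1
        omega
    · congr 1
      omega
end

section
/- Let M₁ ⟵ M₂ be a matroid quotient on [n]. For each 0 ≤ i ≤ r₂ - r₁, the collection B(M^{(i)}) = { S ⊆ [n] : |S| = r₂ - i, S is spanning in M₁, and S is independent in M₂ } is the set of bases of a matroid M^{(i)} on [n]. -/
open Finset

section Aux

variable {α : Type*} [Fintype α] [DecidableEq α]

/-- Augmentation from rank axioms: if `r A < r B` then some element of `B` not in `A`
increases the rank of `A`. -/
lemma higgs_aug (r : Finset α → ℕ)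
    (hmono : ∀ ⦃A B : Finset α⦄, A ⊆ B → r A ≤ r B)
    (hsub : ∀ A B : Finset α, r (A ∪ B) + r (A ∩ B) ≤ r A + r B)
    {A B : Finset α} (h : r A < r B) :
    ∃ f ∈ B, f ∉ A ∧ r A < r (insert f A) := by
  by_contra hc
  push_neg at hc
  have key : ∀ C : Finset α, C ⊆ B → r (A ∪ C) = r A := by
    intro C hC
    induction C using Finset.induction_on with
    | empty => simp
    | @insert f C hf ih =>
      have hfB : f ∈ B := hC (mem_insert_self _ _)
      have hCB : C ⊆ B := (Finset.insert_subset_iff.mp hC).2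
      have ih' := ih hCB
      have hfA : r (insert f A) ≤ r A := by
        by_cases hfa : f ∈ A
        · rw [Finset.insert_eq_self.mpr hfa]
        · exact hc f hfB hfa
      have hsub' := hsub (A ∪ C) (insert f A)
      have hU : (A ∪ C) ∪ insert f A = A ∪ insert f C := by
        ext x; simp [Finset.mem_insert, Finset.mem_union]; tauto
      have hI : A ⊆ (A ∪ C) ∩ insert f A :=
        Finset.subset_inter Finset.subset_union_left
          (Finset.subset_insert _ _)
      have h1 : r A ≤ r ((A ∪ C) ∩ insert f A) := hmono hI
      have h2 : r A ≤ r (A ∪ insert f C) := hmono Finset.subset_union_left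
      rw [hU] at hsub'
      omega
  have := key B (subset_refl B)
  have hBle : r B ≤ r (A ∪ B) := hmono Finset.subset_union_right
  omega

/-- Existence of a basis (independent spanning set) at each rank level. -/
lemma higgs_exists (r : Finset α → ℕ)
    (hle : ∀ S : Finset α, r S ≤ S.card)
    (hmono : ∀ ⦃A B : Finset α⦄, A ⊆ B → r A ≤ r B)
    (hsub : ∀ A B : Finset α, r (A ∪ B) + r (A ∩ B) ≤ r A + r B) :
    ∃ S : Finset α, S.card = r Finset.univ ∧ r S = S.card := by
  suffices h : ∀ m : ℕ, m ≤ r Finset.univ → ∃ S : Finset α, S.card = m ∧ r S = m by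
    obtain ⟨S, h1, h2⟩ := h _ le_rfl
    exact ⟨S, h1, h2.trans h1.symm⟩
  intro m
  induction m with
  | zero =>
    intro _
    refine ⟨∅, by simp, ?_⟩
    have := hle (∅ : Finset α); simpa using this
  | succ n ih =>
    intro hn
    obtain ⟨S, hScard, hSr⟩ := ih (by omega)
    have hlt : r S < r Finset.univ := by omega
    obtain ⟨f, _, hfS, hfr⟩ := higgs_aug r hmono hsub hlt
    have hc : (insert f S).card = n + 1 := by
      rw [Finset.card_insert_of_notMem hfS, hScard]
    have h1 : r (insert f S) ≤ (insert f S).card := hle _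
    rw [hc] at h1
    exact ⟨insert f S, hc, by omega⟩

end Aux

/-- Higgs factorization: for a matroid quotient M₁ ⟵ M₂ on ground set `α` and each
0 ≤ i ≤ r₂ - r₁, the collection of sets S with |S| = r₂ - i, S spanning in M₁
(rk₁ S = r₁) and independent in M₂ (rk₂ S = |S|) is the set of bases of a matroid:
it is nonempty and satisfies the basis exchange property. -/
theorem stmt_9 {α : Type*} [Fintype α] [DecidableEq α]
    (rk1 rk2 : Finset α → ℕ)
    (h1le : ∀ S : Finset α, rk1 S ≤ S.card)
    (h1mono : ∀ ⦃A B : Finset α⦄, A ⊆ B → rk1 A ≤ rk1 B)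
    (h1submod : ∀ A B : Finset α, rk1 (A ∪ B) + rk1 (A ∩ B) ≤ rk1 A + rk1 B)
    (h2le : ∀ S : Finset α, rk2 S ≤ S.card)
    (h2mono : ∀ ⦃A B : Finset α⦄, A ⊆ B → rk2 A ≤ rk2 B)
    (h2submod : ∀ A B : Finset α, rk2 (A ∪ B) + rk2 (A ∩ B) ≤ rk2 A + rk2 B)
    (hquot : ∀ ⦃A B : Finset α⦄, A ⊆ B → rk1 B - rk1 A ≤ rk2 B - rk2 A) :
    ∀ i : ℕ, i ≤ rk2 Finset.univ - rk1 Finset.univ →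
      let isHiggsBasis : Finset α → Prop := fun S =>
        S.card = rk2 Finset.univ - i ∧ rk1 S = rk1 Finset.univ ∧ rk2 S = S.card
      (∃ S, isHiggsBasis S) ∧
      (∀ B₁ B₂ : Finset α, isHiggsBasis B₁ → isHiggsBasis B₂ →
        ∀ e ∈ B₁ \ B₂, ∃ f ∈ B₂ \ B₁, isHiggsBasis (insert f (B₁.erase e))) := by
  intro i hi isHiggsBasis
  -- basic facts
  have h1empty : rk1 (∅ : Finset α) = 0 := by have := h1le (∅ : Finset α); simpa using this
  have h2empty : rk2 (∅ : Finset α) = 0 := by have := h2le (∅ : Finset α); simpa using this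
  have h12 : rk1 (Finset.univ : Finset α) ≤ rk2 Finset.univ := by
    have := hquot (Finset.empty_subset (Finset.univ : Finset α))
    rw [h1empty, h2empty] at this
    omega
  -- the Higgs lift rank function
  set k : ℕ := rk2 Finset.univ - i - rk1 Finset.univ with hk
  set r : Finset α → ℕ := fun S => min (rk2 S) (rk1 S + k) with hr
  have hrle : ∀ S : Finset α, r S ≤ S.card := fun S =>
    le_trans (min_le_left _ _) (h2le S)
  have hrmono : ∀ ⦃A B : Finset α⦄, A ⊆ B → r A ≤ r B := by
    intro A B hAB
    exact min_le_min (h2mono hAB) (by have := h1mono hAB; omega)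
  -- quotient inequality in linear form
  have hq' : ∀ ⦃A B : Finset α⦄, A ⊆ B → rk1 B + rk2 A ≤ rk1 A + rk2 B := by
    intro A B hAB
    have h := hquot hAB
    have h1 := h1mono hAB
    have h2 := h2mono hAB
    omega
  have hrsub : ∀ A B : Finset α, r (A ∪ B) + r (A ∩ B) ≤ r A + r B := by
    intro A B
    have s1 := h1submod A B
    have s2 := h2submod A B
    have qA := hq' (Finset.subset_union_left (s₁ := A) (s₂ := B))
    have qB := hq' (Finset.subset_union_right (s₁ := A) (s₂ := B))
    simp only [hr]
    omega
  -- value of r on univ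
  have hruniv : r Finset.univ = rk2 Finset.univ - i := by
    simp only [hr]
    omega
  -- characterization of Higgs bases via r
  have hchar : ∀ S : Finset α,
      isHiggsBasis S ↔ (S.card = r Finset.univ ∧ r S = S.card) := by
    intro S
    rw [hruniv]
    constructor
    · rintro ⟨hcard, hS1, hS2⟩
      refine ⟨hcard, ?_⟩
      simp only [hr, hS1, hS2, hcard]
      omega
    · rintro ⟨hcard, hrS⟩
      have hS1 : rk1 S ≤ rk1 Finset.univ := h1mono (Finset.subset_univ S)
      have hS2 : rk2 S ≤ S.card := h2le S
      simp only [hr] at hrS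
      refine ⟨hcard, ?_, ?_⟩ <;> omega
  constructor
  · obtain ⟨S, hS⟩ := higgs_exists r hrle hrmono hrsub
    exact ⟨S, (hchar S).mpr hS⟩
  · intro B₁ B₂ hB₁ hB₂ e he
    rw [hchar] at hB₁ hB₂
    obtain ⟨hB₁card, hB₁r⟩ := hB₁
    obtain ⟨hB₂card, hB₂r⟩ := hB₂
    rw [Finset.mem_sdiff] at he
    obtain ⟨heB₁, heB₂⟩ := he
    set A : Finset α := B₁.erase e with hA
    have hAcard : A.card + 1 = B₁.card := Finset.card_erase_add_one heB₁
    -- r A = A.card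
    have hinsA : insert e A = B₁ := Finset.insert_erase heB₁
    have hunit : r B₁ ≤ r A + 1 := by
      have hsub' := hrsub A {e}
      have : A ∪ {e} = B₁ := by rw [Finset.union_comm, ← Finset.insert_eq, hinsA]
      rw [this] at hsub'
      have h1 : r {e} ≤ 1 := by have := hrle {e}; simpa using this
      omega
    have hAr : r A = A.card := by
      have := hrle A
      omega
    have hlt : r A < r B₂ := by omega
    obtain ⟨f, hfB₂, hfA, hfr⟩ := higgs_aug r hrmono hrsub hlt
    have hfne : f ≠ e := fun h => heB₂ (h ▸ hfB₂)
    have hfB₁ : f ∉ B₁ := by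
      intro hf
      exact hfA (Finset.mem_erase.mpr ⟨hfne, hf⟩)
    refine ⟨f, Finset.mem_sdiff.mpr ⟨hfB₂, hfB₁⟩, ?_⟩
    rw [hchar]
    have hcard : (insert f A).card = A.card + 1 := Finset.card_insert_of_notMem hfA
    have hle' : r (insert f A) ≤ (insert f A).card := hrle _
    constructor
    · omega
    · omega
end

section
/- Let M₁ ⟵ M₂ be a matroid quotient on [n] and let the Higgs factorization matroids M^{(i)} be defined by bases { S : |S| = r₂ - i, S spanning in M₁, S independent in M₂ }. Then M^{(i+1)} is an elementary quotient of M^{(i)}: M^{(i+1)} is a quotient of M^{(i)} and rk(M^{(i)}) - rk(M^{(i+1)}) = 1, for all 0 ≤ i ≤ r₂ - r₁ - 1. -/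
open Finset

set_option linter.unusedSectionVars false

section RankAux
variable {α : Type*} [Fintype α] [DecidableEq α]
variable (rk : Finset α → ℕ)

lemma hf_empty (hle : ∀ S : Finset α, rk S ≤ S.card) : rk ∅ = 0 :=
  Nat.le_zero.mp (by simpa using hle ∅)

lemma hf_insert_le (hle : ∀ S : Finset α, rk S ≤ S.card)
    (hsub : ∀ A B : Finset α, rk (A ∪ B) + rk (A ∩ B) ≤ rk A + rk B)
    (x : α) (A : Finset α) : rk (insert x A) ≤ rk A + 1 := by
  by_cases hx : x ∈ A
  · simp [Finset.insert_eq_self.mpr hx]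
  · have h := hsub A {x}
    have h1 : rk {x} ≤ 1 := by simpa using hle {x}
    have h2 : A ∪ {x} = insert x A := by rw [Finset.union_comm, ← Finset.insert_eq]
    have h3 : A ∩ {x} = ∅ := by
      ext y; simp only [Finset.mem_inter, Finset.mem_singleton, Finset.notMem_empty, iff_false]
      rintro ⟨hy, rfl⟩; exact hx hy
    rw [h2, h3] at h
    have h4 := hf_empty rk hle
    omega

/-- local-to-global: if no insertion from U raises the rank of I, then rk U = rk I. -/
lemma hf_local (hmono : ∀ ⦃A B : Finset α⦄, A ⊆ B → rk A ≤ rk B)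
    (hsub : ∀ A B : Finset α, rk (A ∪ B) + rk (A ∩ B) ≤ rk A + rk B)
    (I U : Finset α) (hIU : I ⊆ U) (h : ∀ x ∈ U, rk (insert x I) = rk I) :
    rk U = rk I := by
  suffices H : ∀ n (J : Finset α), I ⊆ J → J ⊆ U → J.card = I.card + n → rk J = rk I by
    exact H (U.card - I.card) U hIU (Finset.Subset.refl U)
      (by have := Finset.card_le_card hIU; omega)
  intro n
  induction n with
  | zero =>
    intro J h1 h2 h3
    have : J = I := (Finset.eq_of_subset_of_card_le h1 (by omega)).symm
    rw [this]
  | succ n ih =>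
    intro J h1 h2 h3
    have hx : ∃ x ∈ J, x ∉ I := by
      by_contra hc
      push_neg at hc
      have : J ⊆ I := hc
      have := Finset.card_le_card this
      omega
    obtain ⟨x, hxJ, hxI⟩ := hx
    have hIJ' : I ⊆ J.erase x := fun y hy =>
      Finset.mem_erase.mpr ⟨fun he => hxI (he ▸ hy), h1 hy⟩
    have hJ' : rk (J.erase x) = rk I :=
      ih (J.erase x) hIJ' ((Finset.erase_subset _ _).trans h2)
        (by rw [Finset.card_erase_of_mem hxJ]; omega)
    have hs := hsub (J.erase x) (insert x I)
    have hu : (J.erase x) ∪ insert x I = J := by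
      rw [Finset.union_insert, Finset.union_eq_left.mpr hIJ', Finset.insert_erase hxJ]
    have hIcap : I ⊆ (J.erase x) ∩ insert x I :=
      Finset.subset_inter hIJ' (Finset.subset_insert x I)
    have h5 := hmono hIcap
    have h6 : rk (insert x I) = rk I := h x (h2 hxJ)
    have h7 := hmono h1
    rw [hu] at hs
    omega

/-- If rk I < rk U and I ⊆ U, some insertion from U raises the rank by exactly one. -/
lemma hf_exchange (hle : ∀ S : Finset α, rk S ≤ S.card)
    (hmono : ∀ ⦃A B : Finset α⦄, A ⊆ B → rk A ≤ rk B)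
    (hsub : ∀ A B : Finset α, rk (A ∪ B) + rk (A ∩ B) ≤ rk A + rk B)
    (I U : Finset α) (hIU : I ⊆ U) (hlt : rk I < rk U) :
    ∃ x ∈ U, x ∉ I ∧ rk (insert x I) = rk I + 1 := by
  by_contra hc
  push_neg at hc
  have hall : ∀ x ∈ U, rk (insert x I) = rk I := by
    intro x hx
    by_cases hxI : x ∈ I
    · rw [Finset.insert_eq_self.mpr hxI]
    · have := hc x hx hxI
      have h1 := hf_insert_le rk hle hsub x I
      have h2 := hmono (Finset.subset_insert x I)
      omega
  have := hf_local rk hmono hsub I U hIU hall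
  omega

/-- If every deletion drops the rank, the set is independent. -/
lemma hf_indep_of_erase (hle : ∀ S : Finset α, rk S ≤ S.card)
    (hmono : ∀ ⦃A B : Finset α⦄, A ⊆ B → rk A ≤ rk B)
    (hsub : ∀ A B : Finset α, rk (A ∪ B) + rk (A ∩ B) ≤ rk A + rk B)
    (X : Finset α) (h : ∀ x ∈ X, rk (X.erase x) < rk X) : rk X = X.card := by
  induction X using Finset.strongInduction with
  | _ X ih =>
    rcases X.eq_empty_or_nonempty with rfl | ⟨x, hx⟩
    · simpa using hf_empty rk hle
    · have h1 : rk (X.erase x) < rk X := h x hx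
      have h2 : rk X ≤ rk (X.erase x) + 1 := by
        have := hf_insert_le rk hle hsub x (X.erase x)
        rwa [Finset.insert_erase hx] at this
      have hprop : ∀ y ∈ X.erase x, rk ((X.erase x).erase y) < rk (X.erase x) := by
        intro y hy
        obtain ⟨hyx, hyX⟩ := Finset.mem_erase.mp hy
        have hs := hsub (X.erase y) (X.erase x)
        have hu : (X.erase y) ∪ (X.erase x) = X := by
          ext z
          simp only [Finset.mem_union, Finset.mem_erase]
          constructor
          · rintro (⟨-, hz⟩ | ⟨-, hz⟩) <;> exact hz
          · intro hz
            by_cases hzy : z = y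
            · exact Or.inr ⟨by rw [hzy]; exact hyx, hz⟩
            · exact Or.inl ⟨hzy, hz⟩
        have hi2 : (X.erase y) ∩ (X.erase x) = (X.erase x).erase y := by
          ext z
          simp only [Finset.mem_inter, Finset.mem_erase]
          tauto
        rw [hu, hi2] at hs
        have h3 := h y hyX
        omega
      have hT := ih (X.erase x) (Finset.erase_ssubset hx) hprop
      have hc : (X.erase x).card + 1 = X.card := by
        rw [Finset.card_erase_of_mem hx]
        have := Finset.card_pos.mpr ⟨x, hx⟩
        omega
      have h4 := hle X
      omega

/-- Every set has an independent subset of the same rank. -/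
lemma hf_exists_basis (hle : ∀ S : Finset α, rk S ≤ S.card)
    (hmono : ∀ ⦃A B : Finset α⦄, A ⊆ B → rk A ≤ rk B)
    (hsub : ∀ A B : Finset α, rk (A ∪ B) + rk (A ∩ B) ≤ rk A + rk B)
    (X : Finset α) : ∃ I, I ⊆ X ∧ rk I = rk X ∧ rk I = I.card := by
  induction X using Finset.strongInduction with
  | _ X ih =>
    by_cases h : ∀ x ∈ X, rk (X.erase x) < rk X
    · exact ⟨X, Finset.Subset.refl X, rfl, hf_indep_of_erase rk hle hmono hsub X h⟩
    · push_neg at h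
      obtain ⟨x, hx, hge⟩ := h
      have heq : rk (X.erase x) = rk X :=
        le_antisymm (hmono (Finset.erase_subset _ _)) hge
      obtain ⟨I, hI1, hI2, hI3⟩ := ih (X.erase x) (Finset.erase_ssubset hx)
      exact ⟨I, hI1.trans (Finset.erase_subset _ _), by omega, hI3⟩

lemma hf_union_le (hle : ∀ S : Finset α, rk S ≤ S.card)
    (hsub : ∀ A B : Finset α, rk (A ∪ B) + rk (A ∩ B) ≤ rk A + rk B)
    (A : Finset α) : ∀ C : Finset α, rk (A ∪ C) ≤ rk A + C.card := by
  intro C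
  induction C using Finset.induction_on with
  | empty => simp
  | @insert x C hxC ih =>
    rw [Finset.union_insert]
    have h1 := hf_insert_le rk hle hsub x (A ∪ C)
    rw [Finset.card_insert_of_notMem hxC]
    omega

lemma hf_indep_subset (hle : ∀ S : Finset α, rk S ≤ S.card)
    (A B : Finset α) (hAB : A ⊆ B)
    (hsub : ∀ A B : Finset α, rk (A ∪ B) + rk (A ∩ B) ≤ rk A + rk B)
    (hB : rk B = B.card) : rk A = A.card := by
  have h1 : A ∪ (B \ A) = B := Finset.union_sdiff_of_subset hAB
  have h2 := hf_union_le rk hle hsub A (B \ A)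
  rw [h1] at h2
  have h3 : (B \ A).card = B.card - A.card := Finset.card_sdiff_of_subset hAB
  have h4 := hle A
  have h5 := Finset.card_le_card hAB
  omega

end RankAux

section Quot
variable {α : Type*} [Fintype α] [DecidableEq α]
variable (rk1 rk2 : Finset α → ℕ)
variable (h1le : ∀ S : Finset α, rk1 S ≤ S.card)
variable (h1mono : ∀ ⦃A B : Finset α⦄, A ⊆ B → rk1 A ≤ rk1 B)
variable (h1submod : ∀ A B : Finset α, rk1 (A ∪ B) + rk1 (A ∩ B) ≤ rk1 A + rk1 B)
variable (h2le : ∀ S : Finset α, rk2 S ≤ S.card)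
variable (h2mono : ∀ ⦃A B : Finset α⦄, A ⊆ B → rk2 A ≤ rk2 B)
variable (h2submod : ∀ A B : Finset α, rk2 (A ∪ B) + rk2 (A ∩ B) ≤ rk2 A + rk2 B)
variable (hquot : ∀ ⦃A B : Finset α⦄, A ⊆ B → rk1 B - rk1 A ≤ rk2 B - rk2 A)

include h1le h2le hquot in
lemma hf_le12 (X : Finset α) : rk1 X ≤ rk2 X := by
  have h := hquot (Finset.empty_subset X)
  have e1 : rk1 (∅ : Finset α) = 0 := Nat.le_zero.mp (by simpa using h1le ∅)
  have e2 : rk2 (∅ : Finset α) = 0 := Nat.le_zero.mp (by simpa using h2le ∅)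
  omega

include h1le h1mono h1submod h2le h2mono h2submod hquot in
/-- Greedy extension of an M₂-independent set to a Higgs basis of size t. -/
lemma hf_extend (t : ℕ) (ht : t ≤ rk2 Finset.univ) :
    ∀ n (I : Finset α), rk2 I = I.card → rk1 Finset.univ + I.card ≤ rk1 I + t →
      I.card + n = t →
      ∃ S, I ⊆ S ∧ S.card = t ∧ rk1 S = rk1 Finset.univ ∧ rk2 S = S.card := by
  intro n
  induction n with
  | zero =>
    intro I hI2 hinv hcard
    refine ⟨I, Finset.Subset.refl I, by omega, ?_, hI2⟩
    have := h1mono (Finset.subset_univ I)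
    omega
  | succ n ih =>
    intro I hI2 hinv hcard
    by_cases hc : rk1 I < rk1 Finset.univ
    · obtain ⟨x, -, hxI, hx1⟩ :=
        hf_exchange rk1 h1le h1mono h1submod I Finset.univ (Finset.subset_univ I) hc
      have hq := hquot (Finset.subset_insert x I)
      have hle2 : rk2 (insert x I) ≤ I.card + 1 := by
        have := h2le (insert x I)
        rw [Finset.card_insert_of_notMem hxI] at this
        exact this
      have hmo2 := h2mono (Finset.subset_insert x I)
      have h2eq : rk2 (insert x I) = (insert x I).card := by
        rw [Finset.card_insert_of_notMem hxI]; omega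
      obtain ⟨S, hS1, hS2, hS3, hS4⟩ := ih (insert x I) h2eq
        (by rw [Finset.card_insert_of_notMem hxI]; omega)
        (by rw [Finset.card_insert_of_notMem hxI]; omega)
      exact ⟨S, (Finset.subset_insert x I).trans hS1, hS2, hS3, hS4⟩
    · have hc' : rk1 I = rk1 Finset.univ :=
        le_antisymm (h1mono (Finset.subset_univ I)) (by omega)
      have hlt2 : rk2 I < rk2 Finset.univ := by omega
      obtain ⟨x, -, hxI, hx2⟩ :=
        hf_exchange rk2 h2le h2mono h2submod I Finset.univ (Finset.subset_univ I) hlt2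
      have h1eq : rk1 (insert x I) = rk1 Finset.univ :=
        le_antisymm (h1mono (Finset.subset_univ _))
          (by rw [← hc']; exact h1mono (Finset.subset_insert x I))
      obtain ⟨S, hS1, hS2, hS3, hS4⟩ := ih (insert x I)
        (by rw [Finset.card_insert_of_notMem hxI]; omega)
        (by rw [Finset.card_insert_of_notMem hxI]; omega)
        (by rw [Finset.card_insert_of_notMem hxI]; omega)
      exact ⟨S, (Finset.subset_insert x I).trans hS1, hS2, hS3, hS4⟩

include h1mono h2le h2mono h2submod in
/-- Grow an M₂-independent, M₁-spanning subset of X, staying inside X. -/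
lemma hf_grow (X : Finset α) :
    ∀ n (I : Finset α), I ⊆ X → rk2 I = I.card → rk1 I = rk1 X →
      I.card + n ≤ rk2 X →
      ∃ J, I ⊆ J ∧ J ⊆ X ∧ rk2 J = J.card ∧ rk1 J = rk1 X ∧ J.card = I.card + n := by
  intro n
  induction n with
  | zero => intro I h1 h2 h3 h4; exact ⟨I, Finset.Subset.refl I, h1, h2, h3, rfl⟩
  | succ n ih =>
    intro I h1 h2 h3 h4
    have hlt : rk2 I < rk2 X := by omega
    obtain ⟨x, hxX, hxI, hx2⟩ := hf_exchange rk2 h2le h2mono h2submod I X h1 hlt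
    have hsub : insert x I ⊆ X := Finset.insert_subset hxX h1
    have h1eq : rk1 (insert x I) = rk1 X :=
      le_antisymm (h1mono hsub) (by rw [← h3]; exact h1mono (Finset.subset_insert x I))
    obtain ⟨J, hJ1, hJ2, hJ3, hJ4, hJ5⟩ := ih (insert x I) hsub
      (by rw [Finset.card_insert_of_notMem hxI]; omega) h1eq
      (by rw [Finset.card_insert_of_notMem hxI]; omega)
    refine ⟨J, (Finset.subset_insert x I).trans hJ1, hJ2, hJ3, hJ4, ?_⟩
    rw [hJ5, Finset.card_insert_of_notMem hxI]; omega

end Quot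
section Formula
variable {α : Type*} [Fintype α] [DecidableEq α]
variable (rk1 rk2 : Finset α → ℕ)
variable (h1le : ∀ S : Finset α, rk1 S ≤ S.card)
variable (h1mono : ∀ ⦃A B : Finset α⦄, A ⊆ B → rk1 A ≤ rk1 B)
variable (h1submod : ∀ A B : Finset α, rk1 (A ∪ B) + rk1 (A ∩ B) ≤ rk1 A + rk1 B)
variable (h2le : ∀ S : Finset α, rk2 S ≤ S.card)
variable (h2mono : ∀ ⦃A B : Finset α⦄, A ⊆ B → rk2 A ≤ rk2 B)
variable (h2submod : ∀ A B : Finset α, rk2 (A ∪ B) + rk2 (A ∩ B) ≤ rk2 A + rk2 B)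
variable (hquot : ∀ ⦃A B : Finset α⦄, A ⊆ B → rk1 B - rk1 A ≤ rk2 B - rk2 A)

include h1le h1mono h1submod h2le h2mono h2submod hquot in
lemma hf_formula (j : ℕ) (hj : j ≤ rk2 Finset.univ - rk1 Finset.univ) (X : Finset α) :
    ((Finset.univ : Finset (Finset α)).filter (fun S =>
        S.card = rk2 Finset.univ - j ∧ rk1 S = rk1 Finset.univ ∧ rk2 S = S.card)).sup
      (fun B => (X ∩ B).card)
      = min (rk2 X) (rk1 X + (rk2 Finset.univ - rk1 Finset.univ - j)) := by
  have hr : rk1 Finset.univ ≤ rk2 Finset.univ :=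
    hf_le12 rk1 rk2 h1le h2le hquot Finset.univ
  apply le_antisymm
  · apply Finset.sup_le
    intro B hB
    rw [Finset.mem_filter] at hB
    obtain ⟨-, hBc, hB1, hB2⟩ := hB
    have c1 : (X ∩ B).card ≤ rk2 X := by
      have e : rk2 (X ∩ B) = (X ∩ B).card :=
        hf_indep_subset rk2 h2le (X ∩ B) B Finset.inter_subset_right h2submod hB2
      have := h2mono (Finset.inter_subset_left : X ∩ B ⊆ X)
      omega
    have c2 : (X ∩ B).card ≤ rk1 X + (rk2 Finset.univ - rk1 Finset.univ - j) := by
      have hu : (X ∩ B) ∪ (B \ X) = B := by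
        ext z
        simp only [Finset.mem_union, Finset.mem_inter, Finset.mem_sdiff]
        tauto
      have h6 := hf_union_le rk1 h1le h1submod (X ∩ B) (B \ X)
      rw [hu] at h6
      have h7 : B \ X = B \ (X ∩ B) := by
        ext z
        simp only [Finset.mem_sdiff, Finset.mem_inter]
        tauto
      have h8 : (B \ (X ∩ B)).card = B.card - (X ∩ B).card :=
        Finset.card_sdiff_of_subset Finset.inter_subset_right
      rw [h7, h8] at h6
      have h9 := h1mono (Finset.inter_subset_left : X ∩ B ⊆ X)
      have h10 := Finset.card_le_card (Finset.inter_subset_right : X ∩ B ⊆ B)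
      omega
    exact le_min c1 c2
  · obtain ⟨I0, hI0X, hI0r, hI0c⟩ := hf_exists_basis rk1 h1le h1mono h1submod X
    have hI02 : rk2 I0 = I0.card := by
      have ha := hf_le12 rk1 rk2 h1le h2le hquot I0
      have hb := h2le I0
      omega
    have hX12 := hf_le12 rk1 rk2 h1le h2le hquot X
    set m := min (rk2 X) (rk1 X + (rk2 Finset.univ - rk1 Finset.univ - j)) with hm
    have hm1 : m ≤ rk2 X := min_le_left _ _
    have hm2 : m ≤ rk1 X + (rk2 Finset.univ - rk1 Finset.univ - j) := min_le_right _ _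
    have hm3 : rk1 X ≤ m := le_min hX12 (Nat.le_add_right _ _)
    obtain ⟨J, hJI0, hJX, hJ2, hJ1, hJc⟩ :=
      hf_grow rk1 rk2 h1mono h2le h2mono h2submod X (m - I0.card) I0 hI0X hI02 hI0r
        (by omega)
    have hJcard : J.card = m := by omega
    have hr1X := h1mono (Finset.subset_univ X)
    obtain ⟨S, hJS, hScard, hS1, hS2⟩ :=
      hf_extend rk1 rk2 h1le h1mono h1submod h2le h2mono h2submod hquot
        (rk2 Finset.univ - j) (by omega) ((rk2 Finset.univ - j) - m) J hJ2
        (by omega) (by omega)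
    have hSmem : S ∈ (Finset.univ : Finset (Finset α)).filter (fun S =>
        S.card = rk2 Finset.univ - j ∧ rk1 S = rk1 Finset.univ ∧ rk2 S = S.card) := by
      rw [Finset.mem_filter]
      exact ⟨Finset.mem_univ S, hScard, hS1, hS2⟩
    have hle' : m ≤ (X ∩ S).card := by
      have e1 : X ∩ J = J := Finset.inter_eq_right.mpr hJX
      have e2 : X ∩ J ⊆ X ∩ S := Finset.inter_subset_inter (Finset.Subset.refl X) hJS
      have := Finset.card_le_card e2
      rw [e1] at this
      omega
    exact hle'.trans (Finset.le_sup (f := fun B => (X ∩ B).card) hSmem)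

end Formula
/-- For the Higgs factorization matroids M^{(i)} of a quotient M₁ ⟵ M₂ (whose bases are
the sets S with |S| = r₂ - i, S spanning in M₁ and independent in M₂, and whose rank
function is rk_{M^{(i)}}(S) = max_{B basis} |S ∩ B|), the matroid M^{(i+1)} is an
elementary quotient of M^{(i)}: it is a quotient and the ranks differ by exactly 1. -/
theorem stmt_10 {α : Type*} [Fintype α] [DecidableEq α]
    (rk1 rk2 : Finset α → ℕ)
    (h1le : ∀ S : Finset α, rk1 S ≤ S.card)
    (h1mono : ∀ ⦃A B : Finset α⦄, A ⊆ B → rk1 A ≤ rk1 B)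
    (h1submod : ∀ A B : Finset α, rk1 (A ∪ B) + rk1 (A ∩ B) ≤ rk1 A + rk1 B)
    (h2le : ∀ S : Finset α, rk2 S ≤ S.card)
    (h2mono : ∀ ⦃A B : Finset α⦄, A ⊆ B → rk2 A ≤ rk2 B)
    (h2submod : ∀ A B : Finset α, rk2 (A ∪ B) + rk2 (A ∩ B) ≤ rk2 A + rk2 B)
    (hquot : ∀ ⦃A B : Finset α⦄, A ⊆ B → rk1 B - rk1 A ≤ rk2 B - rk2 A) :
    let higgsBases : ℕ → Finset (Finset α) := fun i =>
      (Finset.univ : Finset (Finset α)).filter (fun S =>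
        S.card = rk2 Finset.univ - i ∧ rk1 S = rk1 Finset.univ ∧ rk2 S = S.card)
    let rkH : ℕ → Finset α → ℕ := fun i S => (higgsBases i).sup (fun B => (S ∩ B).card)
    ∀ i : ℕ, i + 1 ≤ rk2 Finset.univ - rk1 Finset.univ →
      (∀ ⦃A B : Finset α⦄, A ⊆ B → rkH (i + 1) B - rkH (i + 1) A ≤ rkH i B - rkH i A) ∧
      rkH i Finset.univ - rkH (i + 1) Finset.univ = 1 := by
  intro higgsBases rkH i hi
  have hr : rk1 Finset.univ ≤ rk2 Finset.univ :=
    hf_le12 rk1 rk2 h1le h2le hquot Finset.univ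
  have key : ∀ j, j ≤ rk2 Finset.univ - rk1 Finset.univ → ∀ X : Finset α,
      rkH j X = min (rk2 X) (rk1 X + (rk2 Finset.univ - rk1 Finset.univ - j)) := by
    intro j hj X
    exact hf_formula rk1 rk2 h1le h1mono h1submod h2le h2mono h2submod hquot j hj X
  constructor
  · intro A B hAB
    rw [key i (by omega) A, key i (by omega) B, key (i + 1) hi A, key (i + 1) hi B]
    have hq := hquot hAB
    have h1m := h1mono hAB
    have h2m := h2mono hAB
    have h3 := hf_le12 rk1 rk2 h1le h2le hquot A
    have h4 := hf_le12 rk1 rk2 h1le h2le hquot B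
    have h5 := h1mono (Finset.subset_univ B)
    simp only [Nat.min_def]
    split_ifs <;> omega
  · rw [key i (by omega) Finset.univ, key (i + 1) hi Finset.univ]
    simp only [Nat.min_def]
    split_ifs <;> omega
end

section
/- Let (M₁, M₂) be a matroid quotient on [n]. A subset S ⊆ [n] is a pseudo-basis (spanning in M₁ and independent in M₂) if and only if there exists a basis pair (B₁, B₂) with B₁ a basis of M₁, B₂ a basis of M₂, B₁ ⊆ B₂, and B₁ ⊆ S ⊆ B₂. -/
section Aux
variable {α : Type*} [DecidableEq α] {rk : Finset α → ℕ}

/-- Every set contains an "independent" subset of full rank. -/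
lemma aux_extract
    (hle : ∀ S : Finset α, rk S ≤ S.card)
    (hmono : ∀ ⦃A B : Finset α⦄, A ⊆ B → rk A ≤ rk B)
    (hsubmod : ∀ A B : Finset α, rk (A ∪ B) + rk (A ∩ B) ≤ rk A + rk B) :
    ∀ S : Finset α, ∃ B, B ⊆ S ∧ rk B = B.card ∧ B.card = rk S := by
  intro S
  induction S using Finset.strongInduction with
  | _ S ih =>
    rcases S.eq_empty_or_nonempty with rfl | ⟨x, hx⟩
    · exact ⟨∅, Finset.Subset.refl _, by
        have := hle (∅ : Finset α); simp at this ⊢; omega⟩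
    · set S' := S.erase x with hS'
      have hssub : S' ⊂ S := Finset.erase_ssubset hx
      obtain ⟨B', hB'sub, hB'ind, hB'card⟩ := ih S' hssub
      have hunion : S' ∪ {x} = S := by
        ext y; by_cases hy : y = x <;> simp [hS', hy, hx]
      have hstep : rk S ≤ rk S' + 1 := by
        have h1 := hsubmod S' {x}
        have h2 : rk ({x} : Finset α) ≤ 1 := by simpa using hle {x}
        rw [hunion] at h1
        omega
      by_cases hcase : rk S' = rk S
      · exact ⟨B', hB'sub.trans hssub.subset, hB'ind, by omega⟩
      · have hlt : rk S' < rk S := by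
          exact lt_of_le_of_ne (hmono hssub.subset) hcase
        have hxB' : x ∉ B' := fun h => (Finset.notMem_erase x S) (hB'sub h)
        refine ⟨insert x B', ?_, ?_, ?_⟩
        · exact Finset.insert_subset hx (hB'sub.trans hssub.subset)
        · have hsub2 := hsubmod (insert x B') S'
          have hu : insert x B' ∪ S' = S := by
            rw [Finset.insert_union, Finset.union_eq_right.mpr hB'sub]
            rw [← hunion]; ext y; by_cases hy : y = x <;> simp [hy]
          have hi : (insert x B') ∩ S' = B' := by
            ext y
            constructor
            · intro hy
              rcases Finset.mem_inter.mp hy with ⟨hy1, hy2⟩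
              rcases Finset.mem_insert.mp hy1 with rfl | h
              · exact absurd hy2 (Finset.notMem_erase _ _)
              · exact h
            · intro hy
              exact Finset.mem_inter.mpr ⟨Finset.mem_insert_of_mem hy, hB'sub hy⟩
          rw [hu, hi] at hsub2
          have hcard : (insert x B').card = B'.card + 1 := Finset.card_insert_of_notMem hxB'
          have hub := hle (insert x B')
          rw [hcard] at hub ⊢
          omega
        · have hcard : (insert x B').card = B'.card + 1 := Finset.card_insert_of_notMem hxB'
          omega

lemma aux_close
    (hmono : ∀ ⦃A B : Finset α⦄, A ⊆ B → rk A ≤ rk B)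
    (hsubmod : ∀ A B : Finset α, rk (A ∪ B) + rk (A ∩ B) ≤ rk A + rk B)
    (B : Finset α) (hB : ∀ x, rk (insert x B) = rk B) :
    ∀ T : Finset α, rk (B ∪ T) = rk B := by
  intro T
  induction T using Finset.induction with
  | empty => simp
  | @insert a T ha ih =>
    have key := hsubmod (B ∪ T) (insert a B)
    have hu : (B ∪ T) ∪ insert a B = insert a (B ∪ T) := by
      ext y; simp; tauto
    have hi : B ⊆ (B ∪ T) ∩ insert a B :=
      Finset.subset_inter Finset.subset_union_left (Finset.subset_insert _ _)
    have h3 := hmono hi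
    rw [hu, ih, hB a] at key
    have h4 : rk B ≤ rk (insert a (B ∪ T)) := hmono (by
      intro y hy; simp; tauto)
    have h5 : B ∪ insert a T = insert a (B ∪ T) := by
      ext y; simp
    rw [h5]
    omega

lemma aux_extend [Fintype α]
    (hle : ∀ S : Finset α, rk S ≤ S.card)
    (hmono : ∀ ⦃A B : Finset α⦄, A ⊆ B → rk A ≤ rk B)
    (hsubmod : ∀ A B : Finset α, rk (A ∪ B) + rk (A ∩ B) ≤ rk A + rk B) :
    ∀ (k : ℕ) (S : Finset α), (Finset.univ : Finset α).card - S.card ≤ k → rk S = S.card →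
      ∃ B, S ⊆ B ∧ rk B = B.card ∧ B.card = rk (Finset.univ : Finset α) := by
  intro k
  induction k with
  | zero =>
    intro S hk hS
    have : S = Finset.univ := Finset.eq_univ_of_card S (by
      have h1 := Finset.card_le_univ S
      have h2 := Finset.card_univ (α := α)
      omega)
    exact ⟨S, Finset.Subset.refl _, hS, by subst this; omega⟩
  | succ k ih =>
    intro S hk hS
    by_cases hfull : rk S = rk Finset.univ
    · exact ⟨S, Finset.Subset.refl _, hS, by omega⟩
    · have hlt : rk S < rk Finset.univ := lt_of_le_of_ne (hmono (Finset.subset_univ S)) hfull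
      have : ¬ ∀ x, rk (insert x S) = rk S := by
        intro h
        have := aux_close hmono hsubmod S h Finset.univ
        rw [Finset.union_eq_right.mpr (Finset.subset_univ S)] at this
        omega
      push_neg at this
      obtain ⟨x, hx⟩ := this
      have hxS : x ∉ S := fun h => hx (by rw [Finset.insert_eq_self.mpr h])
      have hge : rk S < rk (insert x S) :=
        lt_of_le_of_ne (hmono (Finset.subset_insert _ _)) (Ne.symm hx)
      have hcard : (insert x S).card = S.card + 1 := Finset.card_insert_of_notMem hxS
      have hub := hle (insert x S)
      have hind : rk (insert x S) = (insert x S).card := by omega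
      have hScard : S.card < (Finset.univ : Finset α).card := by
        have h1 := Finset.card_le_univ (insert x S)
        have h2 := Finset.card_univ (α := α)
        omega
      obtain ⟨B, hB1, hB2, hB3⟩ := ih (insert x S) (by omega) hind
      exact ⟨B, (Finset.subset_insert _ _).trans hB1, hB2, hB3⟩

end Aux

/-- For a matroid quotient (M₁, M₂), a set S is a pseudo-basis (spanning in M₁ and
independent in M₂) iff there is a flag matroid basis (B₁, B₂) with B₁ ⊆ S ⊆ B₂. -/
theorem stmt_13 {α : Type*} [Fintype α] [DecidableEq α]
    (rk1 rk2 : Finset α → ℕ)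
    (h1le : ∀ S : Finset α, rk1 S ≤ S.card)
    (h1mono : ∀ ⦃A B : Finset α⦄, A ⊆ B → rk1 A ≤ rk1 B)
    (h1submod : ∀ A B : Finset α, rk1 (A ∪ B) + rk1 (A ∩ B) ≤ rk1 A + rk1 B)
    (h2le : ∀ S : Finset α, rk2 S ≤ S.card)
    (h2mono : ∀ ⦃A B : Finset α⦄, A ⊆ B → rk2 A ≤ rk2 B)
    (h2submod : ∀ A B : Finset α, rk2 (A ∪ B) + rk2 (A ∩ B) ≤ rk2 A + rk2 B)
    (hquot : ∀ ⦃A B : Finset α⦄, A ⊆ B → rk1 B - rk1 A ≤ rk2 B - rk2 A)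
    (S : Finset α) :
    (rk1 S = rk1 Finset.univ ∧ rk2 S = S.card) ↔
      ∃ B₁ B₂ : Finset α,
        (rk1 B₁ = B₁.card ∧ B₁.card = rk1 Finset.univ) ∧
        (rk2 B₂ = B₂.card ∧ B₂.card = rk2 Finset.univ) ∧
        B₁ ⊆ B₂ ∧ B₁ ⊆ S ∧ S ⊆ B₂ := by
  constructor
  · rintro ⟨hspan, hind⟩
    obtain ⟨B₁, hB₁S, hB₁ind, hB₁card⟩ := aux_extract h1le h1mono h1submod S
    obtain ⟨B₂, hSB₂, hB₂ind, hB₂card⟩ :=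
      aux_extend h2le h2mono h2submod (Finset.univ.card - S.card) S le_rfl hind
    exact ⟨B₁, B₂, ⟨hB₁ind, by rw [hB₁card, hspan]⟩, ⟨hB₂ind, hB₂card⟩,
      hB₁S.trans hSB₂, hB₁S, hSB₂⟩
  · rintro ⟨B₁, B₂, ⟨hB₁ind, hB₁card⟩, ⟨hB₂ind, hB₂card⟩, hB₁B₂, hB₁S, hSB₂⟩
    constructor
    · have h1 : rk1 B₁ ≤ rk1 S := h1mono hB₁S
      have h2 : rk1 S ≤ rk1 Finset.univ := h1mono (Finset.subset_univ S)
      omega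
    · have hub := h2le S
      have hdiff : S ∪ (B₂ \ S) = B₂ := Finset.union_sdiff_of_subset hSB₂
      have hint : S ∩ (B₂ \ S) = ∅ := by
        ext y; simp
      have hkey := h2submod S (B₂ \ S)
      rw [hdiff, hint] at hkey
      have hempty : rk2 (∅ : Finset α) = 0 := by
        have := h2le (∅ : Finset α); simpa using this
      have hsd := h2le (B₂ \ S)
      have hcard : (B₂ \ S).card = B₂.card - S.card := Finset.card_sdiff_of_subset hSB₂
      have hcardle : S.card ≤ B₂.card := Finset.card_le_card hSB₂
      omega
end
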